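/- arXiv:1905.09221 — 2 statements merged into one kernel-verified Lean document; each statement's English description precedes it below -/
import Mathlib

section
/- The clashing assumptions of any justified CAS-model are non-redundant: if ⟨I, χ⟩ is a justified CAS-model of a DKB K, then there is no NI-congruent CAS-model ⟨I', χ'⟩ of K with χ' ⊊ χ. -/
/-- Abstract framework for CAS-interpretations over a defeasible knowledge base:
interpretations, axioms, instantiation tuples, clashing sets, and the satisfaction
and congruence relations among them. -/
structure CASFrame (Interp Axm Tuple CSet : Type) where
  strict : Set Axm
  defeasible : Set Axm
  satAx : Interp → Axm → Prop
  satInst : Interp → Axm → Tuple → Prop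
  congruent : Interp → Interp → Prop
  congr_refl : ∀ I, congruent I I
  congr_symm : ∀ {I J}, congruent I J → congruent J I
  congr_trans : ∀ {I J K}, congruent I J → congruent J K → congruent I K
  satCS : Interp → CSet → Prop
  clashingFor : CSet → Axm → Tuple → Prop
  /-- a clashing set is satisfiable -/
  cs_sat : ∀ S a e, clashingFor S a e → ∃ I, satCS I S
  /-- a clashing set together with the axiom instantiation is unsatisfiable -/
  cs_unsat : ∀ S a e I, clashingFor S a e → satCS I S → ¬ satInst I a e

namespace CASFrame

variable {Interp Axm Tuple CSet : Type} (F : CASFrame Interp Axm Tuple CSet)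

/-- `⟨I, χ⟩` is a CAS-model: `I` satisfies all strict axioms, and every instance of a
defeasible axiom whose tuple is not excepted in `χ`. -/
def CASModel (I : Interp) (χ : Set (Axm × Tuple)) : Prop :=
  (∀ a ∈ F.strict, F.satAx I a) ∧
  (∀ a ∈ F.defeasible, ∀ d : Tuple, (a, d) ∉ χ → F.satInst I a d)

/-- A clashing assumption `p ∈ χ` is justified for `⟨I, χ⟩`: some clashing set for it
is satisfied by every NI-congruent CAS-model with the same `χ`. -/
def Justified (I : Interp) (χ : Set (Axm × Tuple)) (p : Axm × Tuple) : Prop :=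
  ∃ S : CSet, F.clashingFor S p.1 p.2 ∧
    ∀ I' : Interp, F.congruent I' I → F.CASModel I' χ → F.satCS I' S

/-- A justified CAS-model: all clashing assumptions are justified. -/
def JustifiedModel (I : Interp) (χ : Set (Axm × Tuple)) : Prop :=
  F.CASModel I χ ∧ ∀ p ∈ χ, F.Justified I χ p

end CASFrame

/-- Non-redundancy of clashing assumptions: if `⟨I, χ⟩` is a justified CAS-model of a
DKB (all clashing assumptions being on defeasible axioms), then there is no
NI-congruent CAS-model `⟨I', χ'⟩` with `χ' ⊊ χ`. -/
theorem clashing_assumptions_nonredundant {Interp Axm Tuple CSet : Type}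
    (F : CASFrame Interp Axm Tuple CSet)
    (I : Interp) (χ : Set (Axm × Tuple))
    (hJ : F.JustifiedModel I χ)
    (hdef : ∀ p ∈ χ, p.1 ∈ F.defeasible) :
    ¬ ∃ (I' : Interp) (χ' : Set (Axm × Tuple)),
        χ' ⊂ χ ∧ F.congruent I' I ∧ F.CASModel I' χ' := by
  rintro ⟨I', χ', ⟨hsub, hne⟩, hcong, hM'⟩
  obtain ⟨p, hpχ, hpχ'⟩ := Set.not_subset.mp hne
  have hMχ : F.CASModel I' χ :=
    ⟨hM'.1, fun a ha d hd => hM'.2 a ha d (fun h => hd (hsub h))⟩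
  obtain ⟨S, hcl, hsat⟩ := hJ.2 p hpχ
  exact F.cs_unsat S p.1 p.2 I' hcl (hsat I' hcong hMχ)
    (hM'.2 p.1 (hdef p hpχ) p.2 hpχ')
end

section
/- AR-entailment reduces to DKB-entailment: let K = A ∪ T be a DL-Lite_R knowledge base with ABox A and TBox T, and let K̂ = T ∪ { D(α) : α ∈ A } be the DKB making every ABox assertion defeasible. Then the maximal repairs A' ⊆ A (maximal subsets with A' ∪ T satisfiable) correspond bijectively to the justified clashing assumption sets χ = { ⟨α, e⟩ : α(e) ∈ A \ A' } of K̂, and hence K AR-entails an assertion β (i.e., A' ∪ T ⊨ β for all maximal repairs A') if and only if K̂ ⊨ β. -/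
section

variable {α Interp : Type} (A : Set α) (satT : Interp → Prop) (sat : Interp → α → Prop)

/-- `A' ∪ T` is satisfiable. -/
def SatWith (A' : Set α) : Prop := ∃ I : Interp, satT I ∧ ∀ a ∈ A', sat I a

/-- `A'` is a maximal repair: a `⊆`-maximal subset of `A` consistent with `T`. -/
def MaxRepair (A' : Set α) : Prop :=
  A' ⊆ A ∧ SatWith satT sat A' ∧
    ∀ A'' : Set α, A'' ⊆ A → SatWith satT sat A'' → A' ⊆ A'' → A'' = A'

/-- CAS-model of the DKB `K̂` making every ABox assertion defeasible: `I` satisfies the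
TBox and every non-excepted ABox assertion. -/
def CModel (I : Interp) (χ : Set α) : Prop :=
  satT I ∧ ∀ a ∈ A, a ∉ χ → sat I a

/-- Justified CAS-model of `K̂`: each excepted assertion is falsified in every CAS-model
with the same exceptions (its clashing set `{¬a}` is entailed). -/
def JModel (I : Interp) (χ : Set α) : Prop :=
  CModel A satT sat I χ ∧ ∀ a ∈ χ, ∀ I' : Interp, CModel A satT sat I' χ → ¬ sat I' a

/-- AR-entailment reduces to DKB-entailment: the maximal repairs `A' ⊆ A` correspond
bijectively to the justified clashing-assumption sets `χ = A \ A'` of `K̂`, and `K`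
AR-entails `β` iff `K̂ ⊨ β`. -/
theorem ar_entailment_as_dkb_entailment (β : α) :
    (∀ A' ⊆ A, (MaxRepair A satT sat A' ↔ ∃ I : Interp, JModel A satT sat I (A \ A'))) ∧
    (∀ χ ⊆ A, (∃ I : Interp, JModel A satT sat I χ) →
      ∃ A' : Set α, MaxRepair A satT sat A' ∧ χ = A \ A') ∧
    ((∀ A' : Set α, MaxRepair A satT sat A' →
        ∀ I : Interp, satT I → (∀ a ∈ A', sat I a) → sat I β) ↔
      (∀ (I : Interp) (χ : Set α), χ ⊆ A → JModel A satT sat I χ → sat I β)) := by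
  classical
  have hC : ∀ (A' : Set α), A' ⊆ A → ∀ I, satT I → (∀ a ∈ A', sat I a) →
      CModel A satT sat I (A \ A') := by
    intro A' hA' I hT hs
    exact ⟨hT, fun a ha hna => hs a (by by_contra h; exact hna ⟨ha, h⟩)⟩
  have hJ : ∀ (A' : Set α), MaxRepair A satT sat A' → ∀ a ∈ A \ A', ∀ I',
      CModel A satT sat I' (A \ A') → ¬ sat I' a := by
    intro A' hM a ha I' hC' hs
    have hsub : insert a A' ⊆ A := by
      intro x hx; rcases hx with rfl | hx
      · exact ha.1
      · exact hM.1 hx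
    have hsat : SatWith satT sat (insert a A') :=
      ⟨I', hC'.1, fun x hx => by
        rcases hx with rfl | hx
        · exact hs
        · exact hC'.2 x (hM.1 hx) (fun hd => hd.2 hx)⟩
    have heq := hM.2.2 _ hsub hsat (Set.subset_insert a A')
    exact ha.2 (heq ▸ Set.mem_insert a A')
  have key : ∀ A' ⊆ A, (MaxRepair A satT sat A' ↔ ∃ I, JModel A satT sat I (A \ A')) := by
    intro A' hA'
    constructor
    · intro hM
      obtain ⟨I, hT, hs⟩ := hM.2.1
      exact ⟨I, hC A' hA' I hT hs, hJ A' hM⟩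
    · rintro ⟨I, hCM, hjust⟩
      refine ⟨hA', ⟨I, hCM.1, fun a ha => hCM.2 a (hA' ha) (fun hd => hd.2 ha)⟩, ?_⟩
      rintro A'' hA'' ⟨I'', hT'', hs''⟩ hsub
      by_contra hne
      obtain ⟨a, haA'', haA'⟩ : ∃ a, a ∈ A'' ∧ a ∉ A' := by
        by_contra h; push_neg at h
        exact hne (Set.Subset.antisymm h hsub)
      have hCM'' : CModel A satT sat I'' (A \ A') :=
        ⟨hT'', fun x hx hnx => hs'' x (hsub (by by_contra h; exact hnx ⟨hx, h⟩))⟩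
      exact hjust a ⟨hA'' haA'', haA'⟩ I'' hCM'' (hs'' a haA'')
  have part2 : ∀ χ ⊆ A, (∃ I : Interp, JModel A satT sat I χ) →
      ∃ A' : Set α, MaxRepair A satT sat A' ∧ χ = A \ A' := by
    rintro χ hχ ⟨I, hJm⟩
    have hdd : A \ (A \ χ) = χ := Set.diff_diff_cancel_left hχ
    exact ⟨A \ χ, (key (A \ χ) Set.diff_subset).2 ⟨I, by rw [hdd]; exact hJm⟩, hdd.symm⟩
  refine ⟨key, part2, ?_, ?_⟩
  · intro hAR I χ hχ hJm
    obtain ⟨A', hM, rfl⟩ := part2 χ hχ ⟨I, hJm⟩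
    exact hAR A' hM I hJm.1.1 (fun a ha => hJm.1.2 a (hM.1 ha) (fun hd => hd.2 ha))
  · intro hD A' hM I hT hs
    exact hD I (A \ A') Set.diff_subset ⟨hC A' hM.1 I hT hs, hJ A' hM⟩

end
end
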